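/- Fix a real number λ ≠ 0. For all integers n, k with n ≥ k ≥ 0, the degenerate Stirling number of the second kind satisfies S_{2,λ}(n,k) = Σ_{m=k}^{n} S^{(2)}_{J,λ}(m,k) S_{1,λ}(n,m). -/

import Mathlib

open Finset

/-- The degenerate falling factorial `(x)_{n,λ} = x(x−λ)⋯(x−(n−1)λ)`;
for `lam = 1` it is the ordinary falling factorial `(x)_n`. -/
noncomputable def dff (lam : ℝ) (n : ℕ) (x : ℝ) : ℝ :=
  ∏ i ∈ Finset.range n, (x - i * lam)

/-- The degenerate exponential `e_λ^x(t) = Σ_{n≥0} (x)_{n,λ} t^n/n!`. -/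
noncomputable def degExp (lam x : ℝ) : PowerSeries ℝ :=
  PowerSeries.mk fun n => dff lam n x / n.factorial

/-- The degenerate logarithm `log_λ(1+t) = Σ_{n≥1} λ^{n−1}(1)_{n,1/λ} t^n/n!`. -/
noncomputable def degLog (lam : ℝ) : PowerSeries ℝ :=
  PowerSeries.mk fun n =>
    if n = 0 then 0 else lam ^ (n - 1) * dff (1 / lam) n 1 / n.factorial

/-- Composition `f(g(t))` of formal power series (valid definition of composition
when `g` has zero constant term, as in all uses below). -/
noncomputable def pscomp (f g : PowerSeries ℝ) : PowerSeries ℝ :=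
  PowerSeries.mk fun n =>
    ∑ k ∈ Finset.range (n + 1), (PowerSeries.coeff k f) * (PowerSeries.coeff n (g ^ k))

/-! With `g = e_λ(t) - 1`, expanding `e_λ^j(t) = (1 + g)^j = Σ_k C(j,k) g^k` at natural `j` and
comparing with `(j)_{n,λ} = Σ_k S_{2,λ}(n,k) k! C(j,k)` gives, by binomial inversion,
`g^k / k! = Σ_n S_{2,λ}(n,k) t^n / n!`. Since `e_λ(g) - 1 = g ∘ g`, this turns the Jindalrae
generating function `(g ∘ g)^k / k! = (g^k / k!) ∘ g` into
`S^{(2)}_{J,λ}(m,k) = Σ_l S_{2,λ}(m,l) S_{2,λ}(l,k)`, and the orthogonality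
`Σ_m S_{1,λ}(n,m) S_{2,λ}(m,l) = δ_{nl}` collapses the sum over `m`. -/

open PowerSeries

lemma dff_succ (lam : ℝ) (n : ℕ) (x : ℝ) : dff lam (n + 1) x = dff lam n x * (x - n * lam) :=
  prod_range_succ _ _

lemma dff_one_natCast (j k : ℕ) : dff 1 k j = j.descFactorial k := by
  simp [dff, ← descPochhammer_eval_eq_prod_range, descPochhammer_eval_eq_descFactorial]

lemma dff_add (lam : ℝ) (n : ℕ) (x y : ℝ) :
    dff lam n (x + y) =
      ∑ ij ∈ antidiagonal n, (n.choose ij.1 : ℝ) * (dff lam ij.1 x * dff lam ij.2 y) := by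
  induction n with
  | zero => simp [dff]
  | succ n ih =>
    rw [sum_antidiagonal_choose_succ_mul (fun i j => dff lam i x * dff lam j y), dff_succ, ih,
      sum_mul, ← sum_add_distrib]
    refine sum_congr rfl fun ij hij => ?_
    rw [Nat.choose_symm_of_eq_add (mem_antidiagonal.1 hij).symm, dff_succ, dff_succ]
    have : (n : ℝ) = ij.1 + ij.2 := by exact_mod_cast (mem_antidiagonal.1 hij).symm
    rw [this]; ring

lemma eq_of_sum_choose_mul_eq {R : Type*} [Ring R] {a b : ℕ → R}
    (h : ∀ j, ∑ k ∈ range (j + 1), (j.choose k : R) * a k =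
      ∑ k ∈ range (j + 1), (j.choose k : R) * b k) :
    a = b := by
  funext k
  induction k using Nat.strong_induction_on with
  | _ k ih =>
    have hk := h k
    rw [sum_range_succ, sum_range_succ, Nat.choose_self,
      sum_congr rfl fun i hi => by rw [ih i (mem_range.1 hi)]] at hk
    simpa using hk

lemma sum_choose_mul_ite_eq_sum_mul_dff_one (c : ℕ → ℝ) (n j : ℕ) :
    ∑ k ∈ range (j + 1), (j.choose k : ℝ) * (if k ≤ n then c k * k.factorial else 0) =
      ∑ k ∈ range (n + 1), c k * dff 1 k j := by
  set f : ℕ → ℝ := fun k => (j.choose k : ℝ) * if k ≤ n then c k * k.factorial else 0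
  have hj : ∀ k, j < k → f k = 0 := fun k hk => by simp [f, Nat.choose_eq_zero_of_lt hk]
  have hn : ∀ k, n < k → f k = 0 := fun k hk => by simp [f, hk]
  calc ∑ k ∈ range (j + 1), f k = ∑ k ∈ range (n + 1), f k := by
        rcases le_total j n with h | h
        · exact sum_subset (range_subset_range.2 (by omega))
            fun k _ hk => hj k (by simp at hk; omega)
        · exact (sum_subset (range_subset_range.2 (by omega))
            fun k _ hk => hn k (by simp at hk; omega)).symm
    _ = _ := sum_congr rfl fun k hk => by
        simp only [f, dff_one_natCast, Nat.descFactorial_eq_factorial_mul_choose,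
          if_pos (Nat.lt_succ_iff.1 (mem_range.1 hk))]
        push_cast; ring

lemma eq_of_sum_mul_dff_one_eq {n : ℕ} {c d : ℕ → ℝ}
    (h : ∀ x, ∑ l ∈ range (n + 1), c l * dff 1 l x = ∑ l ∈ range (n + 1), d l * dff 1 l x)
    {l : ℕ} (hl : l ≤ n) : c l = d l := by
  have := congrFun (eq_of_sum_choose_mul_eq (a := fun l => if l ≤ n then c l * l.factorial else 0)
    (b := fun l => if l ≤ n then d l * l.factorial else 0) fun j => by
      simp only [sum_choose_mul_ite_eq_sum_mul_dff_one, h]) l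
  simpa [hl, Nat.factorial_ne_zero] using this

lemma coeff_pow_eq_zero_of_lt {R : Type*} [CommRing R] {g : PowerSeries R}
    (hg : constantCoeff g = 0) {n k : ℕ} (h : n < k) : coeff n (g ^ k) = 0 :=
  coeff_of_lt_order _ <| (Nat.cast_lt.2 h).trans_le (le_order_pow_of_constantCoeff_eq_zero k hg)

lemma pscomp_eq_subst {f g : PowerSeries ℝ} (hg : constantCoeff g = 0) :
    pscomp f g = f.subst g := by
  ext n
  rw [pscomp, coeff_mk, coeff_subst' (HasSubst.of_constantCoeff_zero' hg),
    finsum_eq_sum_of_support_subset (s := range (n + 1))]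
  · simp [smul_eq_mul]
  · intro d hd
    refine mem_range.2 (Nat.lt_succ_of_le (not_lt.1 fun h => hd ?_))
    simp [coeff_pow_eq_zero_of_lt hg h]

lemma pscomp_pow {f g : PowerSeries ℝ} (hg : constantCoeff g = 0) (k : ℕ) :
    pscomp f g ^ k = pscomp (f ^ k) g := by
  rw [pscomp_eq_subst hg, pscomp_eq_subst hg, subst_pow (HasSubst.of_constantCoeff_zero' hg)]

lemma pscomp_add_one {f g : PowerSeries ℝ} (hg : constantCoeff g = 0) :
    pscomp (f + 1) g = pscomp f g + 1 := by
  have hsub := HasSubst.of_constantCoeff_zero' hg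
  rw [pscomp_eq_subst hg, pscomp_eq_subst hg, subst_add hsub, ← coe_substAlgHom hsub, map_one]

lemma degExp_mul_degExp (lam x y : ℝ) : degExp lam x * degExp lam y = degExp lam (x + y) := by
  ext n
  simp only [coeff_mul, degExp, coeff_mk, dff_add, sum_div]
  refine sum_congr rfl fun ij hij => ?_
  obtain ⟨i, j⟩ := ij
  obtain rfl := mem_antidiagonal.1 hij
  have h := Nat.add_choose_mul_factorial_mul_factorial i j
  rw [← Nat.choose_symm_add] at h
  have hc : ((i + j).choose i : ℝ) ≠ 0 := mod_cast (Nat.choose_pos (i.le_add_right j)).ne'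
  dsimp only
  rw [← h]
  push_cast
  field_simp

lemma degExp_zero (lam : ℝ) : degExp lam 0 = 1 := by
  ext n
  cases n <;> simp [degExp, dff, coeff_one, prod_range_succ']

lemma degExp_one_pow (lam : ℝ) (j : ℕ) : degExp lam 1 ^ j = degExp lam j := by
  induction j with
  | zero => simp [degExp_zero]
  | succ j ih => rw [pow_succ, ih, degExp_mul_degExp, Nat.cast_succ]

lemma constantCoeff_degExp (lam x : ℝ) : constantCoeff (degExp lam x) = 1 := by
  simp [degExp, ← coeff_zero_eq_constantCoeff_apply, dff]

section Stirling

variable {lam : ℝ} {S1 S2 SJ2 : ℕ → ℕ → ℝ}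

lemma coeff_degExp_sub_one_pow
    (hS2 : ∀ (n : ℕ) (x : ℝ), dff lam n x = ∑ k ∈ range (n + 1), S2 n k * dff 1 k x) (n k : ℕ) :
    coeff n ((degExp lam 1 - 1) ^ k) = if k ≤ n then S2 n k / n.factorial * k.factorial else 0 := by
  refine congrFun (eq_of_sum_choose_mul_eq (a := fun k => coeff n ((degExp lam 1 - 1) ^ k))
    (b := fun k => if k ≤ n then S2 n k / n.factorial * k.factorial else 0) fun j => ?_) k
  calc ∑ k ∈ range (j + 1), (j.choose k : ℝ) * coeff n ((degExp lam 1 - 1) ^ k)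
      = coeff n (degExp lam 1 ^ j) := by
        conv_rhs => rw [← sub_add_cancel (degExp lam 1) 1, add_pow, map_sum]
        refine sum_congr rfl fun m _ => ?_
        rw [one_pow, mul_one, ← map_natCast (C (R := ℝ)), coeff_mul_C, mul_comm]
    _ = ∑ k ∈ range (n + 1), S2 n k / n.factorial * dff 1 k j := by
        rw [degExp_one_pow, degExp, coeff_mk, hS2, sum_div]
        exact sum_congr rfl fun _ _ => by ring
    _ = _ := (sum_choose_mul_ite_eq_sum_mul_dff_one _ n j).symm

lemma jindalrae_eq_sum_stirling2
    (hS2 : ∀ (n : ℕ) (x : ℝ), dff lam n x = ∑ k ∈ range (n + 1), S2 n k * dff 1 k x)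
    (hSJ2 : ∀ k : ℕ, C ((k.factorial : ℝ))⁻¹ * (pscomp (degExp lam 1) (degExp lam 1 - 1) - 1) ^ k
      = mk fun n => if k ≤ n then SJ2 n k / n.factorial else 0)
    {n k : ℕ} (hkn : k ≤ n) :
    SJ2 n k = ∑ m ∈ Icc k n, S2 n m * S2 m k := by
  set g := degExp lam 1 - 1 with hg_def
  have hg : constantCoeff g = 0 := by simp [g, constantCoeff_degExp]
  have h := congrArg (coeff n) (hSJ2 k)
  rw [← sub_add_cancel (degExp lam 1) 1, ← hg_def, pscomp_add_one hg, add_sub_cancel_right,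
    pscomp_pow hg, coeff_C_mul, pscomp, coeff_mk, coeff_mk, if_pos hkn] at h
  simp only [hg_def, coeff_degExp_sub_one_pow hS2, ite_mul, zero_mul, ← sum_filter] at h
  have hfilter : (range (n + 1)).filter (k ≤ ·) = Icc k n := by ext; simp; omega
  rw [hfilter, eq_div_iff (by positivity)] at h
  rw [← h, mul_sum, sum_mul]
  refine sum_congr rfl fun m hm => ?_
  rw [if_pos (mem_Icc.1 hm).2]
  field_simp

lemma sum_stirling1_mul_stirling2
    (hS1 : ∀ (n : ℕ) (x : ℝ), dff 1 n x = ∑ l ∈ range (n + 1), S1 n l * dff lam l x)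
    (hS2 : ∀ (n : ℕ) (x : ℝ), dff lam n x = ∑ k ∈ range (n + 1), S2 n k * dff 1 k x)
    {n l : ℕ} (hl : l ≤ n) :
    ∑ m ∈ Icc l n, S1 n m * S2 m l = if l = n then 1 else 0 := by
  refine eq_of_sum_mul_dff_one_eq (c := fun l => ∑ m ∈ Icc l n, S1 n m * S2 m l)
    (d := fun l => if l = n then 1 else 0) (fun x => ?_) hl
  calc ∑ l ∈ range (n + 1), (∑ m ∈ Icc l n, S1 n m * S2 m l) * dff 1 l x
      = ∑ m ∈ range (n + 1), S1 n m * ∑ l ∈ range (m + 1), S2 m l * dff 1 l x := by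
        simp only [sum_mul, mul_sum, mul_assoc]
        exact sum_comm' fun l m => by simp only [mem_range, mem_Icc]; omega
    _ = ∑ l ∈ range (n + 1), (if l = n then 1 else 0) * dff 1 l x := by
        simp [← hS2, ← hS1]

end Stirling

theorem degenerate_stirling2_via_jindalrae_general (lam : ℝ)
    (S1 S2 : ℕ → ℕ → ℝ) (SJ2 : ℕ → ℕ → ℝ)
    (hS1 : ∀ (n : ℕ) (x : ℝ), dff 1 n x = ∑ l ∈ Finset.range (n + 1), S1 n l * dff lam l x)
    (hS2 : ∀ (n : ℕ) (x : ℝ), dff lam n x = ∑ k ∈ Finset.range (n + 1), S2 n k * dff 1 k x)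
    (hSJ2 : ∀ k : ℕ, (PowerSeries.C ((k.factorial : ℝ))⁻¹) * (pscomp (degExp lam 1) (degExp lam 1 - 1) - 1) ^ k = PowerSeries.mk (fun n => if k ≤ n then SJ2 n k / n.factorial else 0))
    : ∀ n k : ℕ, k ≤ n → S2 n k = ∑ m ∈ Finset.Icc k n, SJ2 m k * S1 n m := by
  intro n k hkn
  symm
  calc ∑ m ∈ Icc k n, SJ2 m k * S1 n m
      = ∑ m ∈ Icc k n, ∑ l ∈ Icc k m, S2 l k * (S1 n m * S2 m l) :=
        sum_congr rfl fun m hm => by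
          rw [jindalrae_eq_sum_stirling2 hS2 hSJ2 (mem_Icc.1 hm).1, sum_mul]
          exact sum_congr rfl fun _ _ => by ring
    _ = ∑ l ∈ Icc k n, S2 l k * ∑ m ∈ Icc l n, S1 n m * S2 m l := by
        simp only [mul_sum]
        exact sum_comm' fun m l => by simp only [mem_Icc]; omega
    _ = S2 n k := by
        rw [sum_congr rfl fun l hl => by rw [sum_stirling1_mul_stirling2 hS1 hS2 (mem_Icc.1 hl).2]]
        simp [hkn]

theorem degenerate_stirling2_via_jindalrae (lam : ℝ) (hlam : lam ≠ 0)
    (S1 S2 : ℕ → ℕ → ℝ) (SJ2 : ℕ → ℕ → ℝ)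
    (hS1 : ∀ (n : ℕ) (x : ℝ), dff 1 n x = ∑ l ∈ Finset.range (n + 1), S1 n l * dff lam l x)
    (hS2 : ∀ (n : ℕ) (x : ℝ), dff lam n x = ∑ k ∈ Finset.range (n + 1), S2 n k * dff 1 k x)
    (hSJ2 : ∀ k : ℕ, (PowerSeries.C ((k.factorial : ℝ))⁻¹) * (pscomp (degExp lam 1) (degExp lam 1 - 1) - 1) ^ k = PowerSeries.mk (fun n => if k ≤ n then SJ2 n k / n.factorial else 0))
    : ∀ n k : ℕ, k ≤ n → S2 n k = ∑ m ∈ Finset.Icc k n, SJ2 m k * S1 n m :=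
  degenerate_stirling2_via_jindalrae_general lam S1 S2 SJ2 hS1 hS2 hSJ2
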